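/- arXiv:1802.03035 — 2 statements merged into one kernel-verified Lean document; each statement's English description precedes it below -/
import Mathlib

section
/- Let S = k[x₁,…,xₙ] and let I ⊆ S be a d-stable-plus-powers ideal for a degree sequence d. Then for all 0 ≤ i < dₙ, there is an isomorphism of S̄-modules ((I : xₙⁱ) + (xₙ))/(xₙ) ≅ Iᵢ, where Iᵢ ⊆ S̄ = k[x₁,…,x_{n-1}] is the i-th component in the decomposition I = ⊕_j Iⱼ xₙʲ. -/
open MvPolynomial

/-- total degree of an exponent vector -/
def expDeg {n : ℕ} (m : Fin n →₀ ℕ) : ℕ := m.sum fun _ e => e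

/-- `u >_lex v` for the lexicographic order with `x₁ > x₂ > ⋯ > xₙ`
(variables indexed so that `X 0` is the largest). -/
def LexGT {n : ℕ} (u v : Fin n →₀ ℕ) : Prop :=
  ∃ i : Fin n, v i < u i ∧ ∀ l : Fin n, l < i → u l = v l

/-- A monomial ideal: an ideal generated by monomials. -/
def IsMonomialIdeal {k : Type*} [Field k] {n : ℕ}
    (I : Ideal (MvPolynomial (Fin n) k)) : Prop :=
  ∃ A : Set (Fin n →₀ ℕ), I = Ideal.span ((fun m => (monomial m (1 : k))) '' A)

/-- A lex ideal: a monomial ideal such that in each degree its monomials form an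
initial lex segment. -/
def IsLexIdeal {k : Type*} [Field k] {n : ℕ}
    (I : Ideal (MvPolynomial (Fin n) k)) : Prop :=
  IsMonomialIdeal I ∧
    ∀ u v : Fin n →₀ ℕ, expDeg u = expDeg v → LexGT u v →
      monomial v (1 : k) ∈ I → monomial u (1 : k) ∈ I

/-- An `xₙ`-stable monomial ideal (in `n+1` variables `x₁,…,x_{n+1}`,
with `xₙ` interpreted as the last variable). -/
def IsXnStable {k : Type*} [Field k] {n : ℕ}
    (I : Ideal (MvPolynomial (Fin (n + 1)) k)) : Prop :=
  IsMonomialIdeal I ∧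
    ∀ u : Fin (n + 1) →₀ ℕ, monomial u (1 : k) ∈ I → 1 ≤ u (Fin.last n) →
      ∀ i : Fin (n + 1), i < Fin.last n →
        monomial (u + Finsupp.single i 1 - Finsupp.single (Fin.last n) 1) (1 : k) ∈ I

/-- A degree sequence: entries in `ℕ ∪ {∞}`, at least 1, weakly increasing. -/
def IsDegSeq {n : ℕ} (d : Fin n → ℕ∞) : Prop :=
  (∀ i, 1 ≤ d i) ∧ Monotone d

/-- The ideal `(x₁^{d₁}, …, xₙ^{dₙ})`, where `xᵢ^∞ = 0` (so infinite entries
contribute nothing). -/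
noncomputable def powersIdeal {n : ℕ} (k : Type*) [Field k] (d : Fin n → ℕ∞) :
    Ideal (MvPolynomial (Fin n) k) :=
  Ideal.span {f | ∃ (i : Fin n) (e : ℕ), d i = (e : ℕ∞) ∧
    f = monomial (Finsupp.single i e) (1 : k)}

/-- A `d`-lex-plus-powers ideal. -/
def IsLPP {k : Type*} [Field k] {n : ℕ} (d : Fin n → ℕ∞)
    (I : Ideal (MvPolynomial (Fin n) k)) : Prop :=
  ∃ L, IsLexIdeal L ∧ I = L ⊔ powersIdeal k d

/-- A `d`-stable-plus-powers ideal. -/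
def IsSPP {k : Type*} [Field k] {n : ℕ} (d : Fin (n + 1) → ℕ∞)
    (I : Ideal (MvPolynomial (Fin (n + 1)) k)) : Prop :=
  ∃ J, IsXnStable J ∧ I = J ⊔ powersIdeal k d

/-- Hilbert function of a (homogeneous) ideal: `HF(I; j) = dim_k [I]_j`. -/
noncomputable def hfI {k : Type*} [Field k] {n : ℕ}
    (I : Ideal (MvPolynomial (Fin n) k)) (j : ℕ) : ℕ :=
  Module.finrank k
    ↥(I.restrictScalars k ⊓ homogeneousSubmodule (Fin n) k j)

/-- Hilbert function of the quotient: `HF(S/I; j) = dim_k [S/I]_j`. -/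
noncomputable def hfQ {k : Type*} [Field k] {n : ℕ}
    (I : Ideal (MvPolynomial (Fin n) k)) (j : ℕ) : ℕ :=
  Module.finrank k
    (↥(homogeneousSubmodule (Fin n) k j) ⧸
      Submodule.comap (homogeneousSubmodule (Fin n) k j).subtype (I.restrictScalars k))

/-- An ideal is homogeneous iff it contains all homogeneous components of its
elements. -/
def IsHomogeneousIdeal {k : Type*} [Field k] {n : ℕ}
    (I : Ideal (MvPolynomial (Fin n) k)) : Prop :=
  ∀ f ∈ I, ∀ j : ℕ, homogeneousComponent j f ∈ I

/-- The inclusion `S̄ = k[x₁,…,xₙ] → S = k[x₁,…,x_{n+1}]`. -/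
noncomputable def inclHom (k : Type*) [Field k] (n : ℕ) :
    MvPolynomial (Fin n) k →+* MvPolynomial (Fin (n + 1)) k :=
  (MvPolynomial.rename (Fin.castSucc : Fin n → Fin (n + 1))).toRingHom

/-- The `i`-th slice `Iᵢ ⊆ S̄` in the decomposition `I = ⊕ᵢ Iᵢ xₙⁱ`
of a monomial ideal `I ⊆ S = S̄[xₙ]`, defined as `(I : xₙⁱ) ∩ S̄`. -/
noncomputable def idealSlice {k : Type*} [Field k] {n : ℕ}
    (I : Ideal (MvPolynomial (Fin (n + 1)) k)) (i : ℕ) :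
    Ideal (MvPolynomial (Fin n) k) :=
  Ideal.comap (inclHom k n)
    (Submodule.colon I (Ideal.span {(X (Fin.last n) : MvPolynomial (Fin (n + 1)) k) ^ i}))

/-- The maximal homogeneous ideal `(x₁,…,xₙ)` of a polynomial ring. -/
noncomputable def maxIdeal (k : Type*) [Field k] (n : ℕ) :
    Ideal (MvPolynomial (Fin n) k) :=
  Ideal.span (Set.range (X : Fin n → MvPolynomial (Fin n) k))


/-- The projection `S = k[x₁,…,x_{n+1}] → S̄ = k[x₁,…,xₙ]` sending `x_{n+1} ↦ 0`
(realizing the isomorphism `S/(x_{n+1}) ≅ S̄`). -/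
noncomputable def killXn (k : Type*) [Field k] (n : ℕ) :
    MvPolynomial (Fin (n + 1)) k →+* MvPolynomial (Fin n) k :=
  (MvPolynomial.aeval
    (Fin.lastCases (0 : MvPolynomial (Fin n) k) (fun i => MvPolynomial.X i))).toRingHom

/-! For a monomial ideal, membership depends only on the support, and so does membership in
`I : xₙⁱ`. Since `S̄ → S → S̄` is the identity and `S → S̄ → S` only deletes the monomials
divisible by `xₙ`, the image of `(I : xₙⁱ) + (xₙ)` in `S̄` is exactly `(I : xₙⁱ) ∩ S̄`. -/

theorem killXn_eq_killCompl (k : Type*) [Field k] (n : ℕ) :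
    killXn k n = (killCompl (Fin.castSucc_injective n) : _ →ₐ[k] _).toRingHom := by
  refine congrArg AlgHom.toRingHom (algHom_ext fun j => ?_)
  refine j.lastCases ?_ fun i => ?_ <;> simp [killCompl]

section KillXn

variable {k : Type*} [Field k] {n : ℕ}

theorem killXn_inclHom (p : MvPolynomial (Fin n) k) : killXn k n (inclHom k n p) = p := by
  rw [killXn_eq_killCompl]
  exact killCompl_rename_app _ p

theorem killXn_X_last : killXn k n (X (Fin.last n)) = 0 := by
  simp [killXn]

theorem support_inclHom_killXn_subset (g : MvPolynomial (Fin (n + 1)) k) :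
    (inclHom k n (killXn k n g)).support ⊆ g.support := by
  rw [killXn_eq_killCompl]
  exact support_rename_killCompl_subset _

theorem map_killXn_sup_span_X_last {K : Ideal (MvPolynomial (Fin (n + 1)) k)}
    (hK : ∀ ⦃p q⦄, q ∈ K → p.support ⊆ q.support → p ∈ K) :
    Ideal.map (killXn k n) (K ⊔ Ideal.span {X (Fin.last n)}) = Ideal.comap (inclHom k n) K := by
  refine le_antisymm (Ideal.map_le_iff_le_comap.2 (sup_le ?_ ?_)) fun f hf => ?_
  · exact fun g hg => hK hg (support_inclHom_killXn_subset g)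
  · rw [Ideal.span_le, Set.singleton_subset_iff, SetLike.mem_coe, Ideal.mem_comap,
      killXn_X_last]
    exact Ideal.zero_mem _
  · rw [← killXn_inclHom f]
    exact Ideal.mem_map_of_mem _ (Ideal.mem_sup_left hf)

end KillXn

theorem MvPolynomial.support_mul_X_pow_subset {σ R : Type*} [CommSemiring R]
    {p q : MvPolynomial σ R} (h : p.support ⊆ q.support) (s : σ) (i : ℕ) :
    (p * X s ^ i).support ⊆ (q * X s ^ i).support := by
  induction i with
  | zero => simpa
  | succ i ih =>
    rw [pow_succ, ← mul_assoc, ← mul_assoc, support_mul_X, support_mul_X]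
    exact Finset.map_subset_map.2 ih

section IsMonomialIdeal

variable {k : Type*} [Field k] {n : ℕ}

theorem IsMonomialIdeal.sup {I J : Ideal (MvPolynomial (Fin n) k)} (hI : IsMonomialIdeal I)
    (hJ : IsMonomialIdeal J) : IsMonomialIdeal (I ⊔ J) := by
  obtain ⟨A, rfl⟩ := hI
  obtain ⟨B, rfl⟩ := hJ
  exact ⟨A ∪ B, by rw [Set.image_union, Ideal.span_union]⟩

theorem isMonomialIdeal_powersIdeal (d : Fin n → ℕ∞) : IsMonomialIdeal (powersIdeal k d) := by
  refine ⟨{m | ∃ (i : Fin n) (e : ℕ), d i = e ∧ m = Finsupp.single i e}, congrArg Ideal.span ?_⟩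
  ext f
  constructor
  · rintro ⟨i, e, hie, rfl⟩
    exact ⟨_, ⟨i, e, hie, rfl⟩, rfl⟩
  · rintro ⟨_, ⟨i, e, hie, rfl⟩, rfl⟩
    exact ⟨i, e, hie, rfl⟩

theorem IsMonomialIdeal.mem_of_support_subset {I : Ideal (MvPolynomial (Fin n) k)}
    (hI : IsMonomialIdeal I) {p q : MvPolynomial (Fin n) k} (hq : q ∈ I)
    (h : p.support ⊆ q.support) : p ∈ I := by
  obtain ⟨A, rfl⟩ := hI
  rw [mem_ideal_span_monomial_image] at hq ⊢
  exact fun m hm => hq m (h hm)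

theorem IsMonomialIdeal.mem_colon_of_support_subset {I : Ideal (MvPolynomial (Fin n) k)}
    (hI : IsMonomialIdeal I) (j : Fin n) (i : ℕ) {p q : MvPolynomial (Fin n) k}
    (hq : q ∈ I.colon (Ideal.span {(X j ^ i : MvPolynomial (Fin n) k)}))
    (h : p.support ⊆ q.support) :
    p ∈ I.colon (Ideal.span {(X j ^ i : MvPolynomial (Fin n) k)}) := by
  rw [Ideal.mem_colon_span_singleton] at hq ⊢
  exact hI.mem_of_support_subset hq (support_mul_X_pow_subset h j i)

end IsMonomialIdeal

theorem slice_eq_image_colon_general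
    {k : Type*} [Field k] {n : ℕ} (d : Fin (n + 1) → ℕ∞)
    (I : Ideal (MvPolynomial (Fin (n + 1)) k)) (hI : IsSPP d I) :
    ∀ i : ℕ, (i : ℕ∞) < d (Fin.last n) →
      Ideal.map (killXn k n)
        (Submodule.colon I
            (Ideal.span {(MvPolynomial.X (Fin.last n) : MvPolynomial (Fin (n + 1)) k) ^ i}) ⊔
          Ideal.span {MvPolynomial.X (Fin.last n)}) =
      idealSlice I i := by
  intro i _
  obtain ⟨J, ⟨hJ, -⟩, rfl⟩ := hI
  have hI : IsMonomialIdeal (J ⊔ powersIdeal k d) := hJ.sup (isMonomialIdeal_powersIdeal d)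
  exact map_killXn_sup_span_X_last fun _ _ hq h => hI.mem_colon_of_support_subset _ i hq h

/-- If `I ⊆ S = k[x₁,…,x_{n+1}]` is a `d`-stable-plus-powers
ideal, then for `0 ≤ i < d_{n+1}` the `S̄`-module `((I : x_{n+1}ⁱ) + (x_{n+1}))/(x_{n+1})`
is (canonically isomorphic to) the component `Iᵢ ⊆ S̄`: under the canonical
isomorphism `S/(x_{n+1}) ≅ S̄`, the image of `(I : x_{n+1}ⁱ) + (x_{n+1})` equals `Iᵢ`. -/
theorem slice_eq_image_colon
    {k : Type*} [Field k] {n : ℕ} (d : Fin (n + 1) → ℕ∞) (hd : IsDegSeq d)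
    (I : Ideal (MvPolynomial (Fin (n + 1)) k)) (hI : IsSPP d I) :
    ∀ i : ℕ, (i : ℕ∞) < d (Fin.last n) →
      Ideal.map (killXn k n)
        (Submodule.colon I
            (Ideal.span {(MvPolynomial.X (Fin.last n) : MvPolynomial (Fin (n + 1)) k) ^ i}) ⊔
          Ideal.span {MvPolynomial.X (Fin.last n)}) =
      idealSlice I i :=
  slice_eq_image_colon_general d I hI
end

section
/- Let S = k[x₁,…,xₙ], d a degree sequence with dₙ < ∞, and ℘ = (x₁^{d₁},…,xₙ^{dₙ}). Let I be a monomial ideal with ℘ ⊊ I ⊊ S and J = ℘ : I. Then I is a d-stable-plus-powers ideal if and only if J is a d-stable-plus-powers ideal. -/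
open MvPolynomial

/-!
Everything reduces to exponent vectors. A monomial ideal `I ⊇ ℘` is spanned by the upper set `A`
of exponents of its monomials, `℘` by `P = {u | ∃ i, dᵢ ≤ uᵢ}`, and `℘ : I` by
`{v | A + v ⊆ P}`. Since every `dᵢ` is finite, taking this link twice gives back `A`: an exponent
`u ∉ A` satisfies `u < d` and is detected by `d - 1 - u`.

As `℘` absorbs every monomial with `uₙ ≥ dₙ`, the ideal spanned by `A` is `d`-SPP exactly when
`A` is closed under `u ↦ xᵢu/xₙ` (`i < n`) for `1 ≤ uₙ < dₙ`, the stable part being the span of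
`{u ∈ A | uₙ < dₙ}`. This truncated stability passes from `A` to its link because
`(xᵢu/xₙ)·v = u·(xᵢv/xₙ)`, and back again by the double-link identity.
-/

noncomputable abbrev monomialSpan (R : Type*) [CommSemiring R] {σ : Type*} (A : Set (σ →₀ ℕ)) :
    Ideal (MvPolynomial σ R) :=
  Ideal.span ((fun m => monomial m (1 : R)) '' A)

section MonomialSpan

variable {R σ : Type*} [CommSemiring R] {A B : Set (σ →₀ ℕ)}

theorem monomial_mem_monomialSpan_iff [Nontrivial R] {u : σ →₀ ℕ} :
    monomial u (1 : R) ∈ monomialSpan R A ↔ ∃ s ∈ A, s ≤ u := by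
  classical
  simp [mem_ideal_span_monomial_image, support_monomial]

theorem IsUpperSet.mem_monomialSpan_iff (hA : IsUpperSet A) {f : MvPolynomial σ R} :
    f ∈ monomialSpan R A ↔ ∀ m ∈ f.support, m ∈ A :=
  mem_ideal_span_monomial_image.trans <| forall₂_congr fun _ _ =>
    ⟨fun ⟨_, hs, hle⟩ => hA hle hs, fun h => ⟨_, h, le_rfl⟩⟩

theorem IsUpperSet.monomial_mem_monomialSpan_iff [Nontrivial R] (hA : IsUpperSet A)
    {u : σ →₀ ℕ} : monomial u (1 : R) ∈ monomialSpan R A ↔ u ∈ A :=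
  _root_.monomial_mem_monomialSpan_iff.trans
    ⟨fun ⟨_, hs, hle⟩ => hA hle hs, fun h => ⟨u, h, le_rfl⟩⟩

theorem IsUpperSet.mul_monomial_mem_monomialSpan_iff (hB : IsUpperSet B)
    {r : MvPolynomial σ R} {u : σ →₀ ℕ} :
    r * monomial u 1 ∈ monomialSpan R B ↔ ∀ m ∈ r.support, m + u ∈ B := by
  classical
  rw [hB.mem_monomialSpan_iff]
  constructor
  · intro h m hm
    apply h
    rwa [mem_support_iff, coeff_mul_monomial, mul_one, ← mem_support_iff]
  · intro h x hx
    obtain ⟨m, hm, w, hw, rfl⟩ := Finset.mem_add.mp (support_mul _ _ hx)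
    rw [Finset.mem_singleton.mp (support_monomial_subset hw)]
    exact h m hm

theorem monomialSpan_union : monomialSpan R (A ∪ B) = monomialSpan R A ⊔ monomialSpan R B := by
  rw [monomialSpan, Set.image_union, Ideal.span_union]

theorem isUpperSet_setOf_monomial_mem (I : Ideal (MvPolynomial σ R)) :
    IsUpperSet {u | monomial u (1 : R) ∈ I} := fun _ _ huv hu =>
  I.mem_of_dvd (monomial_dvd_monomial.mpr ⟨Or.inr huv, one_dvd _⟩) hu

end MonomialSpan

theorem IsMonomialIdeal.eq_monomialSpan {k : Type*} [Field k] {n : ℕ}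
    {I : Ideal (MvPolynomial (Fin n) k)} (hI : IsMonomialIdeal I) :
    I = monomialSpan k {u | monomial u (1 : k) ∈ I} := by
  obtain ⟨A, rfl⟩ := hI
  refine le_antisymm
    (Ideal.span_mono (Set.image_mono fun u hu => Ideal.subset_span ⟨u, hu, rfl⟩)) ?_
  rw [Ideal.span_le]
  rintro _ ⟨u, hu, rfl⟩
  exact hu

section Link

variable {σ : Type*} (E : σ → ℕ) {A : Set (σ →₀ ℕ)}

def powerExps : Set (σ →₀ ℕ) := {u | ∃ i, E i ≤ u i}

def linkExps (A : Set (σ →₀ ℕ)) : Set (σ →₀ ℕ) := {v | ∀ u ∈ A, u + v ∈ powerExps E}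

theorem isUpperSet_powerExps : IsUpperSet (powerExps E) :=
  fun _ _ huv ⟨i, hi⟩ => ⟨i, hi.trans (huv i)⟩

theorem isUpperSet_linkExps : IsUpperSet (linkExps E A) :=
  fun _ _ hvw hv u hu => isUpperSet_powerExps E (add_le_add le_rfl hvw) (hv u hu)

theorem powerExps_subset_linkExps : powerExps E ⊆ linkExps E A :=
  fun _ hv _ _ => isUpperSet_powerExps E le_add_self hv

variable {E}

theorem linkExps_linkExps [Finite σ] (hA : IsUpperSet A) (hP : powerExps E ⊆ A) :
    linkExps E (linkExps E A) = A := by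
  refine Set.Subset.antisymm (fun u hu => ?_) fun u hu v hv => add_comm v u ▸ hv u hu
  by_contra huA
  have hlt : ∀ i, u i < E i := fun i => not_le.mp fun h => huA (hP ⟨i, h⟩)
  let v : σ →₀ ℕ := Finsupp.equivFunOnFinite.symm fun i => E i - 1 - u i
  have hv : v ∈ linkExps E A := by
    intro w hw
    by_contra hwv
    refine huA (hA (fun i => ?_) hw)
    have hui := hlt i
    have hwvi : (w + v) i < E i := not_le.mp fun h => hwv ⟨i, h⟩
    simp only [Finsupp.add_apply, v, Finsupp.coe_equivFunOnFinite_symm] at hwvi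
    omega
  obtain ⟨i, hi⟩ := hu v hv
  have hui := hlt i
  simp only [Finsupp.add_apply, v, Finsupp.coe_equivFunOnFinite_symm] at hi
  omega

end Link

section PowersIdeal

variable {k : Type*} [Field k] {N : ℕ} (E : Fin N → ℕ)

theorem powersIdeal_natCast :
    powersIdeal k (fun i => (E i : ℕ∞)) = monomialSpan k (powerExps E) := by
  have hgen :
      {f | ∃ (i : Fin N) (e : ℕ), (E i : ℕ∞) = e ∧ f = monomial (Finsupp.single i e) (1 : k)} =
        (fun m => monomial m 1) '' Set.range fun i => Finsupp.single i (E i) := by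
    ext f
    simp [eq_comm]
  ext f
  rw [powersIdeal, hgen, mem_ideal_span_monomial_image,
    (isUpperSet_powerExps E).mem_monomialSpan_iff]
  simp [Finsupp.single_le_iff, powerExps]

theorem powersIdeal_colon_monomialSpan (A : Set (Fin N →₀ ℕ)) :
    (powersIdeal k fun i => (E i : ℕ∞)).colon (monomialSpan k A : Set (MvPolynomial (Fin N) k)) =
      monomialSpan k (linkExps E A) := by
  ext r
  rw [powersIdeal_natCast, Ideal.colon_span, Submodule.mem_colon, Set.forall_mem_image,
    (isUpperSet_linkExps E).mem_monomialSpan_iff]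
  simp_rw [smul_eq_mul, (isUpperSet_powerExps E).mul_monomial_mem_monomialSpan_iff]
  simp only [linkExps, Set.mem_ofPred_eq]
  rw [forall₂_comm]
  simp only [add_comm]

end PowersIdeal

section Stability

variable {n : ℕ} {i j : Fin (n + 1)} {u v w : Fin (n + 1) →₀ ℕ}

noncomputable def exchangeLast (i : Fin (n + 1)) (u : Fin (n + 1) →₀ ℕ) : Fin (n + 1) →₀ ℕ :=
  u + Finsupp.single i 1 - Finsupp.single (Fin.last n) 1

theorem exchangeLast_apply_last (hi : i ≠ Fin.last n) :
    exchangeLast i u (Fin.last n) = u (Fin.last n) - 1 := by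
  simp [exchangeLast, hi]

theorem le_exchangeLast_apply (hj : j ≠ Fin.last n) : u j ≤ exchangeLast i u j := by
  simp [exchangeLast, Finsupp.single_apply, hj.symm]

theorem exchangeLast_mono : Monotone (exchangeLast i) :=
  fun _ _ h => tsub_le_tsub_right (add_le_add h le_rfl) _

theorem add_exchangeLast (hv : 1 ≤ v (Fin.last n)) :
    u + exchangeLast i v = exchangeLast i (u + v) := by
  rw [exchangeLast, exchangeLast, add_assoc,
    add_tsub_assoc_of_le (le_add_right (Finsupp.single_le_iff.mpr hv))]

theorem exchangeLast_add (hu : 1 ≤ u (Fin.last n)) :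
    exchangeLast i u + v = exchangeLast i (u + v) := by
  rw [add_comm (exchangeLast i u), add_exchangeLast hu, add_comm u]

theorem le_exchangeLast_of_le (huw : u ≤ w) (hu : u (Fin.last n) = 0) : u ≤ exchangeLast i w := by
  intro j
  rcases eq_or_ne j (Fin.last n) with rfl | hj
  · simp [hu]
  · exact (huw j).trans (le_exchangeLast_apply hj)

theorem exchangeLast_mem_powerExps {E : Fin (n + 1) → ℕ} (hu : u ∈ powerExps E)
    (hlast : u (Fin.last n) < E (Fin.last n)) : exchangeLast i u ∈ powerExps E := by
  obtain ⟨j, hj⟩ := hu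
  have hj_ne : j ≠ Fin.last n := by rintro rfl; omega
  exact ⟨j, hj.trans (le_exchangeLast_apply hj_ne)⟩

def IsXnStableBelow (e : ℕ) (A : Set (Fin (n + 1) →₀ ℕ)) : Prop :=
  ∀ u ∈ A, 1 ≤ u (Fin.last n) → u (Fin.last n) < e → ∀ i < Fin.last n, exchangeLast i u ∈ A

theorem IsXnStableBelow.linkExps {E : Fin (n + 1) → ℕ} {A : Set (Fin (n + 1) →₀ ℕ)}
    (hA : IsXnStableBelow (E (Fin.last n)) A) :
    IsXnStableBelow (E (Fin.last n)) (linkExps E A) := by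
  intro v hv hv1 hve i hi u hu
  rw [add_exchangeLast hv1]
  by_cases hu1 : 1 ≤ u (Fin.last n) ∧ u (Fin.last n) < E (Fin.last n)
  · rw [← exchangeLast_add hu1.1]
    exact hv _ (hA u hu hu1.1 hu1.2 i hi)
  by_cases huv : (u + v) (Fin.last n) < E (Fin.last n)
  · exact exchangeLast_mem_powerExps (hv u hu) huv
  · refine ⟨Fin.last n, ?_⟩
    rw [exchangeLast_apply_last hi.ne]
    rw [Finsupp.add_apply] at huv ⊢
    omega

variable {k : Type*} [Field k] {E : Fin (n + 1) → ℕ} {A : Set (Fin (n + 1) →₀ ℕ)}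

theorem IsSPP.isXnStableBelow (hA : IsUpperSet A)
    (h : IsSPP (fun i => (E i : ℕ∞)) (monomialSpan k A)) : IsXnStableBelow (E (Fin.last n)) A := by
  obtain ⟨K, ⟨hK, hK_stable⟩, hAK⟩ := h
  have hA_eq : A = {u | monomial u (1 : k) ∈ K} ∪ powerExps E := by
    have hspan :
        monomialSpan k A = monomialSpan k ({u | monomial u (1 : k) ∈ K} ∪ powerExps E) := by
      rw [monomialSpan_union, ← hK.eq_monomialSpan, ← powersIdeal_natCast, hAK]
    ext u
    have hKP := (isUpperSet_setOf_monomial_mem K).union (isUpperSet_powerExps E)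
    rw [← hA.monomial_mem_monomialSpan_iff (R := k), hspan, hKP.monomial_mem_monomialSpan_iff]
  rw [hA_eq]
  rintro u (hu | hu) hu1 hue i hi
  · exact Or.inl (hK_stable u hu hu1 i hi)
  · exact Or.inr (exchangeLast_mem_powerExps hu hue)

theorem IsXnStableBelow.isXnStable {e : ℕ} (h : IsXnStableBelow e A) :
    IsXnStable (monomialSpan k {u ∈ A | u (Fin.last n) < e}) := by
  refine ⟨⟨_, rfl⟩, fun w hw _ i hi => ?_⟩
  obtain ⟨u, ⟨huA, hue⟩, huw⟩ := monomial_mem_monomialSpan_iff.mp hw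
  rw [monomial_mem_monomialSpan_iff]
  rcases Nat.eq_zero_or_pos (u (Fin.last n)) with hu0 | hu1
  · exact ⟨u, ⟨huA, hue⟩, le_exchangeLast_of_le huw hu0⟩
  · refine ⟨exchangeLast i u, ⟨h u huA hu1 hue i hi, ?_⟩, exchangeLast_mono huw⟩
    rw [exchangeLast_apply_last hi.ne]
    omega

theorem isSPP_monomialSpan_of_isXnStableBelow (hP : powerExps E ⊆ A)
    (h : IsXnStableBelow (E (Fin.last n)) A) :
    IsSPP (fun i => (E i : ℕ∞)) (monomialSpan k A) := by
  refine ⟨_, h.isXnStable, ?_⟩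
  have hA_eq : A = {u ∈ A | u (Fin.last n) < E (Fin.last n)} ∪ powerExps E := by
    ext u
    refine ⟨fun hu => ?_, fun hu => hu.elim (·.1) (hP ·)⟩
    by_cases hlt : u (Fin.last n) < E (Fin.last n)
    · exact Or.inl ⟨hu, hlt⟩
    · exact Or.inr ⟨_, not_lt.mp hlt⟩
  rw [powersIdeal_natCast, ← monomialSpan_union]
  exact congrArg _ hA_eq

theorem isSPP_monomialSpan_iff (hA : IsUpperSet A) (hP : powerExps E ⊆ A) :
    IsSPP (fun i => (E i : ℕ∞)) (monomialSpan k A) ↔ IsXnStableBelow (E (Fin.last n)) A :=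
  ⟨IsSPP.isXnStableBelow hA, isSPP_monomialSpan_of_isXnStableBelow hP⟩

end Stability

theorem exists_natCast_eq_of_monotone {n : ℕ} {d : Fin (n + 1) → ℕ∞} (hd : Monotone d)
    (hlast : d (Fin.last n) ≠ ⊤) : ∃ E : Fin (n + 1) → ℕ, d = fun i => (E i : ℕ∞) :=
  ⟨fun i => (d i).toNat, funext fun i =>
    (ENat.natCast_toNat (ne_top_of_le_ne_top hlast (hd (Fin.le_last i)))).symm⟩

theorem isSPP_iff_isSPP_link_general
    {k : Type*} [Field k] {n : ℕ} (d : Fin (n + 1) → ℕ∞) (hd : IsDegSeq d)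
    (e : ℕ) (he : d (Fin.last n) = (e : ℕ∞))
    (I : Ideal (MvPolynomial (Fin (n + 1)) k)) (hI : IsMonomialIdeal I)
    (hlt : powersIdeal k d < I)
    (J : Ideal (MvPolynomial (Fin (n + 1)) k))
    (hJ : J = Submodule.colon (powersIdeal k d) I) :
    IsSPP d I ↔ IsSPP d J := by
  obtain ⟨E, rfl⟩ := exists_natCast_eq_of_monotone hd.2 (by simp [he])
  obtain rfl : E (Fin.last n) = e := by simpa using he
  have hA := isUpperSet_setOf_monomial_mem (R := k) I
  have hP : powerExps E ⊆ {u | monomial u (1 : k) ∈ I} := fun u hu => hlt.le <| by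
    rw [powersIdeal_natCast]
    exact (isUpperSet_powerExps E).monomial_mem_monomialSpan_iff.mpr hu
  rw [hJ, hI.eq_monomialSpan, powersIdeal_colon_monomialSpan, isSPP_monomialSpan_iff hA hP,
    isSPP_monomialSpan_iff (isUpperSet_linkExps E) (powerExps_subset_linkExps E)]
  exact ⟨IsXnStableBelow.linkExps, fun h => linkExps_linkExps hA hP ▸ h.linkExps⟩

/-- Let `d` be a degree sequence with `d_{n+1} < ∞`,
`℘ = (x₁^{d₁},…,x_{n+1}^{d_{n+1}})`, `I` a monomial ideal with `℘ ⊊ I ⊊ S`, and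
`J = ℘ : I`. Then `I` is `d`-stable-plus-powers iff `J` is `d`-stable-plus-powers. -/
theorem isSPP_iff_isSPP_link
    {k : Type*} [Field k] {n : ℕ} (d : Fin (n + 1) → ℕ∞) (hd : IsDegSeq d)
    (e : ℕ) (he : d (Fin.last n) = (e : ℕ∞))
    (I : Ideal (MvPolynomial (Fin (n + 1)) k)) (hI : IsMonomialIdeal I)
    (hlt : powersIdeal k d < I) (hne : I ≠ ⊤)
    (J : Ideal (MvPolynomial (Fin (n + 1)) k))
    (hJ : J = Submodule.colon (powersIdeal k d) I) :
    IsSPP d I ↔ IsSPP d J :=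
  isSPP_iff_isSPP_link_general d hd e he I hI hlt J hJ
end
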